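/- Let n ≥ 2, j ∈ ℤ, d ≥ 0, and φ ∈ C_c^∞([1/2,2]) with values in [0,1]. Suppose a : (0,∞) → ℂ is C^N with N = ⌈(n−1)/2⌉ and satisfies |a^{(α)}(λ)| ≤ C_α λ^{−α}(1 + λd)^{−(n−1)/2} for 0 ≤ α ≤ N. Then for all t ∈ ℝ, |∫_0^∞ e^{i(t−d)λ} φ(2^{−j}λ) λ^{n−1} a(λ) dλ| ≤ C 2^{jn} (1 + 2^j|t−d|)^{−N} (1 + 2^j d)^{−(n−1)/2}, and consequently the integral is bounded by C' 2^{j(n+1)/2} (2^{−j} + |t|)^{−(n−1)/2}, with constants independent of j, t, d. -/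

import Mathlib

open MeasureTheory

open MeasureTheory Set Filter Complex


section Aux


lemma my_deriv_contDiff {M : ℕ} {F : ℝ → ℂ} (hF : ContDiff ℝ (M+1 : ℕ) F) :
    ContDiff ℝ M (deriv F) := by
  have : ((M+1 : ℕ) : WithTop ℕ∞) = (M : WithTop ℕ∞) + 1 := by push_cast; ring
  rw [this] at hF
  exact (contDiff_succ_iff_deriv.1 hF).2.2

lemma ibp_step (F : ℝ → ℂ) (hF : ContDiff ℝ 1 F) (h2F : HasCompactSupport F) (σ : ℝ) :
    ∫ x : ℝ, Complex.exp (Complex.I * σ * x) * deriv F x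
      = -(Complex.I * σ) * ∫ x : ℝ, Complex.exp (Complex.I * σ * x) * F x := by
  set c : ℂ := Complex.I * σ with hc
  set e : ℝ → ℂ := fun x => Complex.exp (c * x) with he
  have hce : ContDiff ℝ 1 e :=
    (contDiff_const.mul Complex.ofRealCLM.contDiff).cexp
  have hde : ∀ x : ℝ, HasDerivAt e (c * e x) x := by
    intro x
    have h1 : HasDerivAt (fun x : ℝ => c * (x : ℂ)) c x := by
      simpa using (Complex.ofRealCLM.hasDerivAt (x := x)).const_mul c
    simpa [he, mul_comm] using h1.cexp
  set G : ℝ → ℂ := fun x => e x * F x with hG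
  have hdF : Differentiable ℝ F := hF.differentiable one_ne_zero
  have hGd : ∀ x : ℝ, HasDerivAt G (c * e x * F x + e x * deriv F x) x := by
    intro x
    exact (hde x).mul (hdF x).hasDerivAt
  have hGc : ContDiff ℝ 1 G := hce.mul hF
  have h2G : HasCompactSupport G := h2F.mul_left
  have hderivG : deriv G = fun x => c * e x * F x + e x * deriv F x := by
    funext x; exact (hGd x).deriv
  have hcont1 : Continuous fun x : ℝ => e x * F x := (hce.continuous).mul hF.continuous
  have hcont2 : Continuous fun x : ℝ => e x * deriv F x :=
    (hce.continuous).mul (hF.continuous_deriv le_rfl)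
  have hint1 : Integrable (fun x : ℝ => e x * F x) :=
    hcont1.integrable_of_hasCompactSupport h2F.mul_left
  have hint2 : Integrable (fun x : ℝ => e x * deriv F x) :=
    hcont2.integrable_of_hasCompactSupport h2F.deriv.mul_left
  have hzero : ∫ x : ℝ, deriv G x = 0 := by
    have hIoi := HasCompactSupport.integral_Ioi_deriv_eq hGc h2G 0
    have hIic := HasCompactSupport.integral_Iic_deriv_eq hGc h2G 0
    have hintG : Integrable (deriv G) := by
      exact ((hGc.continuous_deriv le_rfl).integrable_of_hasCompactSupport h2G.deriv)
    rw [← intervalIntegral.integral_Iic_add_Ioi (hintG.integrableOn) (hintG.integrableOn), hIoi, hIic]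
    ring
  rw [hderivG] at hzero
  have hint1' : Integrable (fun x : ℝ => c * e x * F x) := by
    simpa [mul_assoc] using hint1.const_mul c
  rw [integral_add hint1' hint2] at hzero
  have h1 : ∫ a : ℝ, c * e a * F a = c * ∫ a : ℝ, e a * F a := by
    simp_rw [mul_assoc]
    exact integral_const_mul c _
  rw [h1] at hzero
  show ∫ x : ℝ, e x * deriv F x = -c * ∫ x : ℝ, e x * F x
  linear_combination hzero

lemma ibp_iter (M : ℕ) (σ : ℝ) : ∀ (F : ℝ → ℂ), ContDiff ℝ M F → HasCompactSupport F →
    |σ|^M * ‖∫ x : ℝ, Complex.exp (Complex.I * σ * x) * F x‖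
      = ‖∫ x : ℝ, Complex.exp (Complex.I * σ * x) * iteratedDeriv M F x‖ := by
  induction M with
  | zero => intro F hF h2F; simp [iteratedDeriv_zero]
  | succ M ih =>
    intro F hF h2F
    have hF1 : ContDiff ℝ 1 F := hF.of_le (by exact_mod_cast Nat.one_le_cast.mpr (Nat.succ_le_succ (Nat.zero_le M)))
    have hd : ContDiff ℝ M (deriv F) := my_deriv_contDiff hF
    have key := ibp_step F hF1 h2F σ
    have := ih (deriv F) hd h2F.deriv
    rw [key] at this
    rw [iteratedDeriv_succ']
    rw [← this]
    rw [norm_mul, norm_neg, norm_mul]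
    rw [Complex.norm_I, one_mul, Complex.norm_real, Real.norm_eq_abs]
    ring

lemma integral_bound_of_support (f : ℝ → ℂ) (A B K : ℝ) (hAB : A ≤ B)
    (hcont : Continuous f) (hsub : ∀ x ∉ Set.Icc A B, f x = 0)
    (hK : ∀ x ∈ Set.Icc A B, ‖f x‖ ≤ K) :
    ‖∫ x : ℝ, f x‖ ≤ K * (B - A) := by
  rw [← MeasureTheory.setIntegral_eq_integral_of_forall_compl_eq_zero hsub]
  have h := MeasureTheory.norm_setIntegral_le_of_norm_le_const (μ := volume)
    (s := Set.Icc A B) (f := f) ?_ hK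
  · rwa [Real.volume_real_Icc_of_le hAB] at h
  · rw [Real.volume_Icc]; exact ENNReal.ofReal_lt_top

lemma iteratedDeriv_support_subset {F : ℝ → ℂ} {s : Set ℝ} (hs : IsClosed s)
    (h : Function.support F ⊆ s) (m : ℕ) :
    Function.support (iteratedDeriv m F) ⊆ s := by
  induction m with
  | zero => simpa [iteratedDeriv_zero]
  | succ m ih =>
    rw [iteratedDeriv_succ]
    exact support_deriv_subset.trans (closure_minimal ih hs)

lemma exists_iteratedDeriv_bound (H : ℝ → ℂ) (N : ℕ) (hH : ContDiff ℝ N H)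
    (h2H : HasCompactSupport H) :
    ∃ K : ℝ, 0 ≤ K ∧ ∀ m ≤ N, ∀ μ : ℝ, ‖iteratedDeriv m H μ‖ ≤ K := by
  have hcs : ∀ m, HasCompactSupport (iteratedDeriv m H) := by
    intro m; induction m with
    | zero => simpa [iteratedDeriv_zero]
    | succ m ih => rw [iteratedDeriv_succ]; exact ih.deriv
  have key : ∀ m : ℕ, ∃ C : ℝ, 0 ≤ C ∧ (m ≤ N → ∀ μ, ‖iteratedDeriv m H μ‖ ≤ C) := by
    intro m
    rcases le_or_gt m N with hm | hm
    · have hcont : Continuous (iteratedDeriv m H) :=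
        hH.continuous_iteratedDeriv m (by exact_mod_cast hm)
      obtain ⟨C, hC⟩ := hcont.bounded_above_of_compact_support (hcs m)
      exact ⟨max C 0, le_max_right _ _, fun _ μ => (hC μ).trans (le_max_left _ _)⟩
    · exact ⟨0, le_rfl, fun h => absurd h (not_le.2 hm)⟩
  choose Cm hCm0 hCm using key
  refine ⟨∑ m ∈ Finset.range (N+1), Cm m, Finset.sum_nonneg fun m _ => hCm0 m, ?_⟩
  intro m hm μ
  refine (hCm m hm μ).trans ?_
  exact Finset.single_le_sum (fun i _ => hCm0 i) (Finset.mem_range.2 (Nat.lt_succ_of_le hm))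

lemma leibniz_norm_bound (M : ℕ) (g b : ℝ → ℂ) (hg : ContDiff ℝ M g)
    (hb : ContDiffOn ℝ M b (Set.Ioi 0)) {x : ℝ} (hx : x ∈ Set.Ioi (0:ℝ)) :
    ‖iteratedDeriv M (fun y => g y * b y) x‖ ≤
      ∑ i ∈ Finset.range (M + 1), (M.choose i : ℝ) * ‖iteratedDeriv i g x‖ *
        ‖iteratedDerivWithin (M - i) b (Set.Ioi 0) x‖ := by
  have h1 : ‖iteratedDeriv M (fun y => g y * b y) x‖
      = ‖iteratedFDerivWithin ℝ M (fun y => g y * b y) (Set.Ioi 0) x‖ := by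
    rw [← norm_iteratedFDeriv_eq_norm_iteratedDeriv,
      iteratedFDerivWithin_of_isOpen M isOpen_Ioi hx]
  rw [h1]
  refine (norm_iteratedFDerivWithin_mul_le hg.contDiffOn hb isOpen_Ioi.uniqueDiffOn hx le_rfl).trans ?_
  apply Finset.sum_le_sum
  intro i hi
  rw [iteratedFDerivWithin_of_isOpen i isOpen_Ioi hx, norm_iteratedFDeriv_eq_norm_iteratedDeriv,
    norm_iteratedFDerivWithin_eq_norm_iteratedDerivWithin]

lemma contDiff_of_zero_below (F : ℝ → ℂ) (M : ℕ) (A : ℝ) (hA : 0 < A)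
    (h1 : ContDiffOn ℝ M F (Set.Ioi 0)) (h0 : ∀ x < A, F x = 0) : ContDiff ℝ M F := by
  rw [contDiff_iff_contDiffAt]
  intro x
  rcases lt_or_ge x A with h | h
  · exact ContDiffAt.congr_of_eventuallyEq contDiffAt_const
      (eventually_of_mem (Iio_mem_nhds h) fun y hy => h0 y hy)
  · exact h1.contDiffAt (Ioi_mem_nhds (lt_of_lt_of_le hA h))


lemma iteratedDeriv_const_mul' (m : ℕ) (c : ℂ) : ∀ (f : ℝ → ℂ), ContDiff ℝ m f →
    iteratedDeriv m (fun x => c * f x) = fun x => c * iteratedDeriv m f x := by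
  induction m with
  | zero => intro f _; simp [iteratedDeriv_zero]
  | succ m ih =>
    intro f hf
    have hdf : Differentiable ℝ f :=
      hf.differentiable (by simp)
    have h1 : deriv (fun x => c * f x) = fun x => c * deriv f x := by
      funext x; exact deriv_const_mul c (hdf x)
    rw [iteratedDeriv_succ', h1, ih (deriv f) (my_deriv_contDiff hf), ← iteratedDeriv_succ']

end Aux

set_option maxHeartbeats 2000000 in

/-- Oscillatory dispersive estimate for the microlocalized spectral measure.
Let `n ≥ 2`, `j ∈ ℤ`, `d ≥ 0`, `φ ∈ C_c^∞([1/2,2])` with values in `[0,1]`, and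
`N = ⌈(n−1)/2⌉`.  If `a` is `C^N` on `(0,∞)` with
`|a^{(α)}(λ)| ≤ C_α λ^{−α}(1+λd)^{−(n−1)/2}` for `0 ≤ α ≤ N`, then
`|∫_0^∞ e^{i(t−d)λ} φ(2^{−j}λ) λ^{n−1} a(λ) dλ|
  ≤ C 2^{jn}(1+2^j|t−d|)^{−N}(1+2^j d)^{−(n−1)/2}`,
and consequently the integral is bounded by `C' 2^{j(n+1)/2}(2^{−j}+|t|)^{−(n−1)/2}`,
with constants independent of `j`, `t`, `d`. -/
theorem stmt_6 (n : ℕ) (hn : 2 ≤ n) (φ : ℝ → ℝ) (hφ : ContDiff ℝ (⊤ : ℕ∞) φ)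
    (hsupp : Function.support φ ⊆ Set.Icc (1/2 : ℝ) 2)
    (hφ01 : ∀ x, φ x ∈ Set.Icc (0:ℝ) 1) (Cd : ℕ → ℝ) :
    ∃ C C' : ℝ, 0 < C ∧ 0 < C' ∧
      ∀ (j : ℤ) (d : ℝ), 0 ≤ d → ∀ a : ℝ → ℂ,
        ContDiffOn ℝ (⌈((n : ℝ) - 1) / 2⌉₊) a (Set.Ioi 0) →
        (∀ k : ℕ, k ≤ ⌈((n : ℝ) - 1) / 2⌉₊ → ∀ l : ℝ, 0 < l →
          ‖iteratedDerivWithin k a (Set.Ioi 0) l‖ ≤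
            Cd k * l ^ (-(k : ℝ)) * (1 + l * d) ^ (-((n : ℝ) - 1) / 2)) →
        ∀ t : ℝ,
          ‖∫ l in Set.Ioi (0:ℝ),
              Complex.exp (Complex.I * (t - d) * l) * (φ ((2:ℝ) ^ (-j) * l) : ℂ) *
                (l : ℂ) ^ (n - 1) * a l‖ ≤
            C * (2:ℝ) ^ (j * (n : ℤ)) *
              (1 + (2:ℝ) ^ j * |t - d|) ^ (-(⌈((n : ℝ) - 1) / 2⌉₊ : ℝ)) *
              (1 + (2:ℝ) ^ j * d) ^ (-((n : ℝ) - 1) / 2) ∧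
          ‖∫ l in Set.Ioi (0:ℝ),
              Complex.exp (Complex.I * (t - d) * l) * (φ ((2:ℝ) ^ (-j) * l) : ℂ) *
                (l : ℂ) ^ (n - 1) * a l‖ ≤
            C' * (2:ℝ) ^ ((j : ℝ) * ((n : ℝ) + 1) / 2) *
              ((2:ℝ) ^ (-j) + |t|) ^ (-((n : ℝ) - 1) / 2) := by
  classical
  set N : ℕ := ⌈((n : ℝ) - 1) / 2⌉₊ with hNdef
  have hn2 : (2:ℝ) ≤ (n:ℝ) := by exact_mod_cast hn
  set s : ℝ := ((n : ℝ) - 1) / 2 with hs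
  have hs0 : 0 < s := by rw [hs]; linarith
  have hsN : s ≤ (N:ℝ) := Nat.le_ceil _
  have hexp : (-((n : ℝ) - 1) / 2) = -s := by rw [hs]; ring
  -- the model bump H and its derivative bounds
  set H : ℝ → ℂ := fun μ => (φ μ : ℂ) * (μ : ℂ) ^ (n - 1) with hHdef
  have hφ0 : ∀ x : ℝ, x ∉ Set.Icc (1/2 : ℝ) 2 → φ x = 0 := by
    intro x hx
    by_contra h
    exact hx (hsupp h)
  have hHsm : ∀ M : ℕ, ContDiff ℝ M H :=
    fun M => ((Complex.ofRealCLM.contDiff.comp (hφ.of_le (by exact_mod_cast le_top))).mul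
      (Complex.ofRealCLM.contDiff.pow (n-1)))
  have h2H : HasCompactSupport H := by
    apply HasCompactSupport.intro (isCompact_Icc (a := (1/2:ℝ)) (b := 2))
    intro x hx
    simp [hHdef, hφ0 x hx]
  obtain ⟨K, hK0, hK⟩ := exists_iteratedDeriv_bound H N (hHsm N) h2H
  set Bc : ℕ → ℝ := fun k => max (Cd k) 0 with hBc
  have hBc0 : ∀ k, 0 ≤ Bc k := fun k => le_max_right _ _
  have h2s0 : (0:ℝ) < (2:ℝ)^s := Real.rpow_pos_of_pos two_pos s
  set SB : ℝ := ∑ i ∈ Finset.range (N+1), (N.choose i : ℝ) * K * (Bc (N-i) * 2^(N-i)) with hSB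
  have hSB0 : 0 ≤ SB := Finset.sum_nonneg (fun i _ => by positivity)
  set C1 : ℝ := (3/2) * (2^(n-1) * Bc 0 * (2:ℝ)^s) with hC1
  have hC10 : 0 ≤ C1 := by positivity
  set D : ℝ := (3/2) * ((2:ℝ)^s * SB) with hD
  have hD0 : 0 ≤ D := by positivity
  set C : ℝ := 2^N * max C1 D + 1 with hC
  have hC0 : (0:ℝ) < C := by positivity
  set C' : ℝ := C * (2:ℝ)^s with hC'
  have hC'0 : (0:ℝ) < C' := by positivity
  refine ⟨C, C', hC0, hC'0, ?_⟩
  intro j d hd a ha habnd t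
  rw [hexp] at habnd ⊢
  set p : ℝ := (2:ℝ)^j with hp
  have hp0 : (0:ℝ) < p := by rw [hp]; positivity
  have hpinv : (2:ℝ)^(-j) = p⁻¹ := by rw [zpow_neg, hp]
  have hppinv : p * p⁻¹ = 1 := mul_inv_cancel₀ hp0.ne'
  rw [hpinv]
  set σ : ℝ := t - d with hσ
  set g : ℝ → ℂ := fun l => ((φ (p⁻¹ * l) : ℝ) : ℂ) * (l:ℂ)^(n-1) with hgdef
  set F : ℝ → ℂ := fun l => g l * a l with hFdef
  set E : ℂ := ∫ x : ℝ, Complex.exp (Complex.I * (σ:ℝ) * x) * F x with hE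
  -- support of g and F
  have hgsupp : ∀ l : ℝ, l ∉ Set.Icc (p/2) (2*p) → g l = 0 := by
    intro l hl
    have : φ (p⁻¹ * l) = 0 := by
      apply hφ0
      intro hmem
      apply hl
      obtain ⟨h1, h2⟩ := hmem
      constructor
      · nlinarith [mul_le_mul_of_nonneg_left h1 hp0.le]
      · nlinarith [mul_le_mul_of_nonneg_left h2 hp0.le]
    simp [hgdef, this]
  have hFsupp : ∀ l : ℝ, l ∉ Set.Icc (p/2) (2*p) → F l = 0 := by
    intro l hl; simp [hFdef, hgsupp l hl]
  have hAB : p/2 ≤ 2*p := by linarith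
  -- smoothness
  have hgsm : ∀ M : ℕ, ContDiff ℝ M g := by
    intro M
    apply ContDiff.mul
    · exact Complex.ofRealCLM.contDiff.comp
        ((hφ.of_le (by exact_mod_cast le_top)).comp (contDiff_const.mul contDiff_id))
    · exact Complex.ofRealCLM.contDiff.pow (n-1)
  have hFOn : ContDiffOn ℝ N F (Set.Ioi 0) := ((hgsm N).contDiffOn).mul ha
  have hFsm : ContDiff ℝ N F := by
    apply contDiff_of_zero_below F N (p/2) (by linarith) hFOn
    intro x hx
    apply hFsupp
    intro hmem
    exact absurd hmem.1 (not_le.2 hx)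
  have h2F : HasCompactSupport F :=
    HasCompactSupport.intro isCompact_Icc hFsupp
  -- identification of the integral
  have hIeq : (∫ l in Set.Ioi (0:ℝ),
        Complex.exp (Complex.I * ((t:ℂ) - (d:ℂ)) * l) * (φ (p⁻¹ * l) : ℂ) *
          (l : ℂ) ^ (n - 1) * a l) = E := by
    have h1 : (∫ l in Set.Ioi (0:ℝ),
        Complex.exp (Complex.I * ((t:ℂ) - (d:ℂ)) * l) * (φ (p⁻¹ * l) : ℂ) *
          (l : ℂ) ^ (n - 1) * a l)
        = ∫ l in Set.Ioi (0:ℝ), Complex.exp (Complex.I * (σ:ℝ) * l) * F l := by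
      apply setIntegral_congr_fun measurableSet_Ioi
      intro l _
      show Complex.exp (Complex.I * ((t:ℂ) - (d:ℂ)) * l) * (φ (p⁻¹ * l) : ℂ) *
            (l : ℂ) ^ (n - 1) * a l = Complex.exp (Complex.I * (σ:ℝ) * l) * F l
      rw [hFdef, hgdef]
      have hcast : ((σ:ℝ):ℂ) = (t:ℂ) - (d:ℂ) := by rw [hσ]; push_cast; ring
      rw [hcast]
      ring
    have h2 : (∫ l in Set.Ioi (0:ℝ), Complex.exp (Complex.I * (σ:ℝ) * l) * F l) = E := by
      rw [hE]
      apply setIntegral_eq_integral_of_forall_compl_eq_zero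
      intro x hx
      have hxle : x ≤ 0 := not_lt.1 hx
      have : F x = 0 := by
        apply hFsupp
        intro hmem
        have := hmem.1
        nlinarith
      simp [this]
    exact h1.trans h2
  rw [hIeq]
  -- basic positivity on the support interval
  have hIccpos : ∀ l ∈ Set.Icc (p/2) (2*p), (0:ℝ) < l := fun l hl => lt_of_lt_of_le (by linarith) hl.1
  have hR0 : (0:ℝ) ≤ (1 + p*d) ^ (-s) := Real.rpow_nonneg (by nlinarith) _
  -- decay transfer
  have hdecay : ∀ l ∈ Set.Icc (p/2) (2*p), (1 + l*d) ^ (-s) ≤ (2:ℝ)^s * (1 + p*d) ^ (-s) := by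
    intro l hl
    have hld : (0:ℝ) ≤ l * d := mul_nonneg (hIccpos l hl).le hd
    have h1 : (0:ℝ) < (1 + p*d)/2 := by nlinarith
    have h2 : (1 + p*d)/2 ≤ 1 + l*d := by nlinarith [hl.1, mul_le_mul_of_nonneg_right hl.1 hd]
    have h3 : (1 + l*d) ^ (-s) ≤ ((1 + p*d)/2) ^ (-s) :=
      Real.rpow_le_rpow_of_nonpos h1 h2 (neg_nonpos.2 hs0.le)
    have h4 : ((1 + p*d)/2) ^ (-s) = (2:ℝ)^s * (1 + p*d) ^ (-s) := by
      have hinv : ((2:ℝ)⁻¹) ^ (-s) = (2:ℝ)^s := by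
        rw [← Real.rpow_neg_one 2, ← Real.rpow_mul (by norm_num)]
        norm_num
      rw [div_eq_mul_inv, Real.mul_rpow (by nlinarith) (by norm_num), hinv]
      ring
    rw [h4] at h3
    exact h3
  have hlam : ∀ (k:ℕ), ∀ l ∈ Set.Icc (p/2) (2*p), l ^ (-(k:ℝ)) ≤ 2^k * ((p^k)⁻¹ : ℝ) := by
    intro k l hl
    have h1 : (0:ℝ) < p/2 := by linarith
    have h3 : l ^ (-(k:ℝ)) ≤ (p/2) ^ (-(k:ℝ)) :=
      Real.rpow_le_rpow_of_nonpos h1 hl.1 (by simp)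
    have h4 : (p/2) ^ (-(k:ℝ)) = 2^k * ((p^k)⁻¹ : ℝ) := by
      rw [show (-(k:ℝ)) = (((-(k:ℤ)) : ℤ) : ℝ) by push_cast; ring, Real.rpow_intCast,
        zpow_neg, zpow_natCast, div_pow, inv_div, div_eq_mul_inv]
    rw [h4] at h3
    exact h3
  have habnd' : ∀ k : ℕ, k ≤ N → ∀ l ∈ Set.Icc (p/2) (2*p),
      ‖iteratedDerivWithin k a (Set.Ioi 0) l‖ ≤
        Bc k * (2^k * ((p^k)⁻¹:ℝ)) * ((2:ℝ)^s * (1 + p*d) ^ (-s)) := by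
    intro k hk l hl
    refine (habnd k hk l (hIccpos l hl)).trans ?_
    have h1 : Cd k * l ^ (-(k:ℝ)) ≤ Bc k * (2^k * ((p^k)⁻¹:ℝ)) := by
      have := hlam k l hl
      have hl0 : (0:ℝ) ≤ l ^ (-(k:ℝ)) := Real.rpow_nonneg (hIccpos l hl).le _
      have hCdB : Cd k ≤ Bc k := le_max_left _ _
      nlinarith [hBc0 k]
    have h2 := hdecay l hl
    have hq0 : (0:ℝ) ≤ (1 + l*d) ^ (-s) :=
      Real.rpow_nonneg (by nlinarith [mul_nonneg (hIccpos l hl).le hd]) _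
    have hr0 : (0:ℝ) ≤ Cd k * l ^ (-(k:ℝ)) → True := fun _ => trivial
    calc Cd k * l ^ (-(k:ℝ)) * (1 + l*d) ^ (-s)
        ≤ (Bc k * (2^k * ((p^k)⁻¹:ℝ))) * (1 + l*d) ^ (-s) :=
          mul_le_mul_of_nonneg_right h1 hq0
      _ ≤ (Bc k * (2^k * ((p^k)⁻¹:ℝ))) * ((2:ℝ)^s * (1 + p*d) ^ (-s)) := by
          apply mul_le_mul_of_nonneg_left h2
          positivity
  -- bounds on iterated derivatives of g
  have hne : (p:ℂ) ≠ 0 := by exact_mod_cast hp0.ne'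
  have hgH : g = fun l => ((p:ℂ))^(n-1) * H (p⁻¹ * l) := by
    funext l
    simp only [hgdef, hHdef]
    push_cast
    rw [mul_pow]
    have h2 : ((p:ℂ))^(n-1) * ((p:ℂ)⁻¹)^(n-1) = 1 := by
      rw [← mul_pow, mul_inv_cancel₀ hne, one_pow]
    calc (φ (p⁻¹ * l) : ℂ) * (l:ℂ)^(n-1)
        = ((p:ℂ)^(n-1) * ((p:ℂ)⁻¹)^(n-1)) * ((φ (p⁻¹ * l) : ℂ) * (l:ℂ)^(n-1)) := by
          rw [h2, one_mul]
      _ = (p:ℂ)^(n-1) * ((φ (p⁻¹ * l) : ℂ) * (((p:ℂ)⁻¹)^(n-1) * (l:ℂ)^(n-1))) := by ring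
  have hgbound : ∀ i, i ≤ N → ∀ l : ℝ, ‖iteratedDeriv i g l‖ ≤ K * (p^(n-1) * ((p^i)⁻¹:ℝ)) := by
    intro i hi l
    have hcomp : ContDiff ℝ i (fun l : ℝ => H (p⁻¹ * l)) :=
      (hHsm i).comp (contDiff_const.mul contDiff_id)
    rw [hgH, iteratedDeriv_const_mul' i _ _ hcomp]
    have hscale := iteratedDeriv_comp_const_smul (hHsm i) (p⁻¹ : ℝ)
    rw [hscale]
    have hnorm1 : ‖((p:ℂ))^(n-1)‖ = p^(n-1) := by
      rw [norm_pow]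
      simp [abs_of_pos hp0]
    have hnorm2 : ‖(p⁻¹:ℝ)^i • iteratedDeriv i H (p⁻¹ * l)‖
        = (p^i)⁻¹ * ‖iteratedDeriv i H (p⁻¹ * l)‖ := by
      rw [norm_smul, Real.norm_eq_abs, _root_.abs_pow, abs_inv, abs_of_pos hp0, inv_pow]
    rw [norm_mul, hnorm1, hnorm2]
    have := hK i hi (p⁻¹ * l)
    calc p^(n-1) * ((p^i)⁻¹ * ‖iteratedDeriv i H (p⁻¹ * l)‖)
        ≤ p^(n-1) * ((p^i)⁻¹ * K) := by
          apply mul_le_mul_of_nonneg_left _ (by positivity)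
          apply mul_le_mul_of_nonneg_left this (by positivity)
      _ = K * (p^(n-1) * ((p^i)⁻¹:ℝ)) := by ring
  -- norm of the oscillatory factor
  have hnormexp : ∀ x : ℝ, ‖Complex.exp (Complex.I * (σ:ℝ) * x)‖ = 1 := by
    intro x
    rw [Complex.norm_exp]
    have h0 : (Complex.I * (σ:ℝ) * x).re = 0 := by simp
    rw [h0, Real.exp_zero]
  have hcontexp : Continuous fun x : ℝ => Complex.exp (Complex.I * (σ:ℝ) * x) :=
    Complex.continuous_exp.comp (continuous_const.mul Complex.continuous_ofReal)
  have hgnorm : ∀ l ∈ Set.Icc (p/2) (2*p), ‖g l‖ ≤ 2^(n-1) * p^(n-1) := by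
    intro l hl
    have hφ1 : |φ (p⁻¹ * l)| ≤ 1 := abs_le.2 ⟨by linarith [(hφ01 (p⁻¹*l)).1], (hφ01 (p⁻¹*l)).2⟩
    have hl2 : |l| ≤ 2*p := by
      rw [abs_of_pos (hIccpos l hl)]; exact hl.2
    have : ‖g l‖ = |φ (p⁻¹ * l)| * |l|^(n-1) := by
      simp only [hgdef]
      rw [norm_mul, norm_pow, Complex.norm_real, Real.norm_eq_abs, Complex.norm_real,
        Real.norm_eq_abs]
    rw [this]
    calc |φ (p⁻¹ * l)| * |l|^(n-1) ≤ 1 * (2*p)^(n-1) := by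
          apply mul_le_mul hφ1 (pow_le_pow_left₀ (abs_nonneg l) hl2 (n-1)) (by positivity)
            (by norm_num)
      _ = 2^(n-1) * p^(n-1) := by rw [one_mul, mul_pow]
  -- trivial bound
  have hnn : n - 1 + 1 = n := by omega
  have hpow : p^(n-1) * p = p^n := by rw [← pow_succ, hnn]
  have hE1 : ‖E‖ ≤ C1 * p^n * (1 + p*d)^(-s) := by
    rw [hE]
    have hb := integral_bound_of_support (fun x => Complex.exp (Complex.I * (σ:ℝ) * x) * F x)
      (p/2) (2*p) (2^(n-1) * p^(n-1) * (Bc 0 * ((2:ℝ)^s * (1 + p*d)^(-s)))) hAB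
      (hcontexp.mul hFsm.continuous)
      (fun x hx => by simp [hFsupp x hx])
      ?_
    · refine hb.trans (le_of_eq ?_)
      rw [hC1, ← hpow]; ring
    · intro x hx
      rw [norm_mul, hnormexp, one_mul, hFdef]
      have h1 := hgnorm x hx
      have h2 := habnd' 0 (Nat.zero_le N) x hx
      rw [iteratedDerivWithin_zero] at h2
      have h2' : ‖a x‖ ≤ Bc 0 * ((2:ℝ)^s * (1 + p*d)^(-s)) := by
        calc ‖a x‖ ≤ Bc 0 * (2^0 * ((p^0)⁻¹:ℝ)) * ((2:ℝ)^s * (1 + p*d)^(-s)) := h2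
          _ = Bc 0 * ((2:ℝ)^s * (1 + p*d)^(-s)) := by norm_num
      calc ‖g x * a x‖ = ‖g x‖ * ‖a x‖ := norm_mul _ _
        _ ≤ (2^(n-1) * p^(n-1)) * (Bc 0 * ((2:ℝ)^s * (1 + p*d)^(-s))) :=
            mul_le_mul h1 h2' (norm_nonneg _) (by positivity)
  -- oscillatory bound
  have hFsuppset : Function.support F ⊆ Set.Icc (p/2) (2*p) := by
    intro l hl
    by_contra h
    exact hl (hFsupp l h)
  have hFNsupp := iteratedDeriv_support_subset isClosed_Icc hFsuppset N
  have hFNzero : ∀ x ∉ Set.Icc (p/2) (2*p), iteratedDeriv N F x = 0 := by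
    intro x hx
    by_contra h
    exact hx (hFNsupp h)
  have hFNbound : ∀ x ∈ Set.Icc (p/2) (2*p), ‖iteratedDeriv N F x‖ ≤
      SB * (p^(n-1) * ((p^N)⁻¹:ℝ)) * ((2:ℝ)^s * (1 + p*d)^(-s)) := by
    intro x hx
    have hx0 : x ∈ Set.Ioi (0:ℝ) := hIccpos x hx
    have hlb := leibniz_norm_bound N g a (hgsm N) ha hx0
    rw [hFdef]
    refine hlb.trans ?_
    rw [hSB, Finset.sum_mul, Finset.sum_mul]
    apply Finset.sum_le_sum
    intro i hi
    have hiN : i ≤ N := Nat.lt_succ_iff.1 (Finset.mem_range.1 hi)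
    have h1 := hgbound i hiN x
    have h2 := habnd' (N - i) (Nat.sub_le N i) x hx
    have hkey : ((p^i)⁻¹:ℝ) * ((p^(N-i))⁻¹:ℝ) = ((p^N)⁻¹:ℝ) := by
      rw [← mul_inv, ← pow_add]
      congr 2
      omega
    calc (N.choose i : ℝ) * ‖iteratedDeriv i g x‖ * ‖iteratedDerivWithin (N-i) a (Set.Ioi 0) x‖
        ≤ (N.choose i : ℝ) * (K * (p^(n-1) * ((p^i)⁻¹:ℝ)))
            * (Bc (N-i) * (2^(N-i) * ((p^(N-i))⁻¹:ℝ)) * ((2:ℝ)^s * (1 + p*d)^(-s))) := by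
          apply mul_le_mul (mul_le_mul_of_nonneg_left h1 (by positivity)) h2 (norm_nonneg _)
            (by positivity)
      _ = ((N.choose i : ℝ) * K * (Bc (N-i) * 2^(N-i))) * (p^(n-1) * ((p^N)⁻¹:ℝ))
            * ((2:ℝ)^s * (1 + p*d)^(-s)) := by
          rw [← hkey]; ring
  have hibp := ibp_iter N σ F hFsm h2F
  have hb2 := integral_bound_of_support
    (fun x => Complex.exp (Complex.I*(σ:ℝ)*x) * iteratedDeriv N F x) (p/2) (2*p)
    (SB * (p^(n-1) * ((p^N)⁻¹:ℝ)) * ((2:ℝ)^s * (1 + p*d)^(-s))) hAB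
    (hcontexp.mul (hFsm.continuous_iteratedDeriv N le_rfl))
    (fun x hx => by simp [hFNzero x hx])
    (fun x hx => by rw [norm_mul, hnormexp, one_mul]; exact hFNbound x hx)
  have hpN0 : (p:ℝ)^N ≠ 0 := pow_ne_zero N hp0.ne'
  have hE2 : (p*|σ|)^N * ‖E‖ ≤ D * p^n * (1 + p*d)^(-s) := by
    have h3 : |σ|^N * ‖E‖ ≤ SB * (p^(n-1) * ((p^N)⁻¹:ℝ)) * ((2:ℝ)^s * (1 + p*d)^(-s))
        * (2*p - p/2) := by
      rw [hE, hibp]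
      exact hb2
    calc (p*|σ|)^N * ‖E‖ = p^N * (|σ|^N * ‖E‖) := by rw [mul_pow]; ring
      _ ≤ p^N * (SB * (p^(n-1) * ((p^N)⁻¹:ℝ)) * ((2:ℝ)^s * (1 + p*d)^(-s)) * (2*p - p/2)) :=
          mul_le_mul_of_nonneg_left h3 (by positivity)
      _ = D * p^n * (1 + p*d)^(-s) := by
          rw [hD, ← hpow]
          field_simp
          ring
  set X : ℝ := p * |σ| with hX
  have hX0 : (0:ℝ) ≤ X := mul_nonneg hp0.le (abs_nonneg σ)
  have hQ0 : (0:ℝ) < 1 + X := by linarith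
  have hzj : (2:ℝ)^(j*(n:ℤ)) = p^n := by rw [zpow_mul, ← hp, zpow_natCast]
  have hQRpow : (1 + X)^(-(N:ℝ)) = (((1+X)^N)⁻¹:ℝ) := by
    rw [Real.rpow_neg hQ0.le, Real.rpow_natCast]
  -- the main combined bound
  have hfirst : ‖E‖ ≤ C * p^n * (1 + X)^(-(N:ℝ)) * (1 + p*d)^(-s) := by
    rw [hQRpow, show C * p^n * (((1+X)^N)⁻¹:ℝ) * (1 + p*d)^(-s)
      = (C * p^n * (1 + p*d)^(-s)) / (1+X)^N from by ring, le_div_iff₀ (by positivity)]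
    rcases le_total X 1 with hX1 | hX1
    · have h2N : (1+X)^N ≤ 2^N := pow_le_pow_left₀ (by linarith) (by linarith) N
      calc ‖E‖ * (1+X)^N ≤ (C1 * p^n * (1 + p*d)^(-s)) * 2^N := by
            apply mul_le_mul hE1 h2N (by positivity) ?_
            have := mul_nonneg (mul_nonneg hC10 (pow_nonneg hp0.le n)) hR0
            linarith
        _ = (C1 * 2^N) * (p^n * (1 + p*d)^(-s)) := by ring
        _ ≤ C * (p^n * (1 + p*d)^(-s)) := by
            apply mul_le_mul_of_nonneg_right ?_ (by positivity)
            rw [hC]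
            nlinarith [mul_le_mul_of_nonneg_left (le_max_left C1 D)
              (pow_nonneg (by norm_num : (0:ℝ) ≤ 2) N)]
        _ = C * p^n * (1 + p*d)^(-s) := by ring
    · have hXN : (1+X)^N ≤ 2^N * X^N := by
        rw [← mul_pow]
        exact pow_le_pow_left₀ (by linarith) (by linarith) N
      calc ‖E‖ * (1+X)^N ≤ ‖E‖ * (2^N * X^N) :=
            mul_le_mul_of_nonneg_left hXN (norm_nonneg E)
        _ = 2^N * (X^N * ‖E‖) := by ring
        _ ≤ 2^N * (D * p^n * (1 + p*d)^(-s)) := by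
            apply mul_le_mul_of_nonneg_left hE2 (by positivity)
        _ = (2^N * D) * (p^n * (1 + p*d)^(-s)) := by ring
        _ ≤ C * (p^n * (1 + p*d)^(-s)) := by
            apply mul_le_mul_of_nonneg_right ?_ (by positivity)
            rw [hC]
            nlinarith [mul_le_mul_of_nonneg_left (le_max_right C1 D)
              (pow_nonneg (by norm_num : (0:ℝ) ≤ 2) N)]
        _ = C * p^n * (1 + p*d)^(-s) := by ring
  constructor
  · rw [hzj]
    exact hfirst
  · -- second bound
    have hW0 : (0:ℝ) < p⁻¹ + |t| := add_pos_of_pos_of_nonneg (inv_pos.2 hp0) (abs_nonneg t)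
    have hpW0 : (0:ℝ) < (p/2) * (p⁻¹ + |t|) := mul_pos (by linarith) hW0
    have hQR : (1+X)^(-(N:ℝ)) * (1 + p*d)^(-s) ≤ ((p/2) * (p⁻¹ + |t|))^(-s) := by
      rcases le_total d (|t|/2) with hc | hc
      · have h1 : |t| - |d| ≤ |t - d| := abs_sub_abs_le_abs_sub t d
        rw [_root_.abs_of_nonneg hd, ← hσ] at h1
        have hσt : |t|/2 ≤ |σ| := by linarith
        have h2 : (p/2) * (p⁻¹ + |t|) ≤ 1 + X := by
          rw [hX]
          nlinarith [mul_le_mul_of_nonneg_left hσt hp0.le]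
        have hQ1 : (1+X)^(-(N:ℝ)) ≤ (1+X)^(-s) :=
          Real.rpow_le_rpow_of_exponent_le (by linarith) (by linarith)
        have hQ2 : (1+X)^(-s) ≤ ((p/2) * (p⁻¹ + |t|))^(-s) :=
          Real.rpow_le_rpow_of_nonpos hpW0 h2 (by linarith)
        have hR1 : (1 + p*d)^(-s) ≤ 1 :=
          Real.rpow_le_one_of_one_le_of_nonpos (by nlinarith) (by linarith)
        calc (1+X)^(-(N:ℝ)) * (1 + p*d)^(-s) ≤ (1+X)^(-(N:ℝ)) * 1 :=
              mul_le_mul_of_nonneg_left hR1 (Real.rpow_nonneg (by linarith) _)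
          _ = (1+X)^(-(N:ℝ)) := mul_one _
          _ ≤ ((p/2) * (p⁻¹ + |t|))^(-s) := hQ1.trans hQ2
      · have h2 : (p/2) * (p⁻¹ + |t|) ≤ 1 + p*d := by
          nlinarith [mul_le_mul_of_nonneg_left hc hp0.le]
        have hR2 : (1 + p*d)^(-s) ≤ ((p/2) * (p⁻¹ + |t|))^(-s) :=
          Real.rpow_le_rpow_of_nonpos hpW0 h2 (by linarith)
        have hQ1 : (1+X)^(-(N:ℝ)) ≤ 1 :=
          Real.rpow_le_one_of_one_le_of_nonpos (by linarith)
            (neg_nonpos.2 (Nat.cast_nonneg N))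
        calc (1+X)^(-(N:ℝ)) * (1 + p*d)^(-s) ≤ 1 * (1 + p*d)^(-s) :=
              mul_le_mul_of_nonneg_right hQ1 hR0
          _ = (1 + p*d)^(-s) := one_mul _
          _ ≤ ((p/2) * (p⁻¹ + |t|))^(-s) := hR2
    have hinv2 : ((2:ℝ)⁻¹) ^ (-s) = (2:ℝ)^s := by
      rw [← Real.rpow_neg_one 2, ← Real.rpow_mul (by norm_num)]
      norm_num
    have hpowid : p^n * ((p/2) * (p⁻¹ + |t|))^(-s)
        = (2:ℝ)^s * ((2:ℝ)^((j:ℝ)*((n:ℝ)+1)/2)) * (p⁻¹ + |t|)^(-s) := by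
      rw [Real.mul_rpow (by positivity) hW0.le]
      have h1 : (p/2)^(-s) = (2:ℝ)^s * p ^ (-s) := by
        rw [div_eq_mul_inv, Real.mul_rpow hp0.le (by norm_num), hinv2]
        ring
      rw [h1]
      have h2 : p^n * p^(-s) = (2:ℝ)^((j:ℝ)*((n:ℝ)+1)/2) := by
        have hpr : p = (2:ℝ)^((j:ℝ)) := by
          rw [hp, ← Real.rpow_intCast 2 j]
        rw [hpr, ← Real.rpow_natCast ((2:ℝ)^((j:ℝ))) n, ← Real.rpow_mul (by norm_num),
          ← Real.rpow_mul (by norm_num), ← Real.rpow_add (by norm_num)]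
        congr 1
        rw [hs]
        push_cast
        ring
      rw [← h2]
      ring
    calc ‖E‖ ≤ C * p^n * (1 + X)^(-(N:ℝ)) * (1 + p*d)^(-s) := hfirst
      _ = C * (p^n * ((1 + X)^(-(N:ℝ)) * (1 + p*d)^(-s))) := by ring
      _ ≤ C * (p^n * (((p/2) * (p⁻¹ + |t|))^(-s))) := by
          apply mul_le_mul_of_nonneg_left ?_ hC0.le
          apply mul_le_mul_of_nonneg_left hQR (by positivity)
      _ = C * ((2:ℝ)^s * ((2:ℝ)^((j:ℝ)*((n:ℝ)+1)/2)) * (p⁻¹ + |t|)^(-s)) := by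
          rw [← hpowid]
      _ = C' * (2:ℝ)^((j:ℝ)*((n:ℝ)+1)/2) * (p⁻¹ + |t|)^(-s) := by
          rw [hC']; ring
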